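/- arXiv:0801.4587 — 9 statements merged into one kernel-verified Lean document; each statement's English description precedes it below -/
import Mathlib

section
/- Every automorphism of the real associative algebra of quaternions ℍ is inner, i.e., for every algebra automorphism τ : ℍ → ℍ there exists a unit quaternion a ∈ Sp(1) such that τ(x) = a * x * a⁻¹ for all x ∈ ℍ. -/
/-!
Both `τ i` and `τ j` square to `-1`, and they anticommute. Whenever `p ^ 2 = q ^ 2 = -1` one has
`(p + q) * p = q * (p + q)`, so conjugation by `p + q` carries `p` to `q` unless `q = -p`, in which
case any unit anticommuting with `p` does. This moves `i` onto `τ i`; the same trick, applied to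
`j` with a conjugator built from elements anticommuting with `i`, then moves `j` onto `τ j` while
fixing `i`. An algebra map out of `ℍ` is determined by its values on `i` and `j`, and rescaling the
conjugating quaternion to norm `1` does not change the conjugation.
-/

open ConjAct

theorem semiconjBy_add_of_mul_self_eq_neg_one {A : Type*} [Ring A] {p q : A}
    (hp : p * p = -1) (hq : q * q = -1) : SemiconjBy (p + q) p q := by
  simp only [SemiconjBy, add_mul, mul_add, hp, hq, add_comm]

theorem smul_mul_mul_inv_smul {K D : Type*} [Field K] [DivisionRing D] [Algebra K D]
    {r : K} (hr : r ≠ 0) (w x : D) : r • w * x * (r • w)⁻¹ = w * x * w⁻¹ := by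
  rw [smul_inv₀, smul_mul_assoc, smul_mul_assoc, mul_smul_comm, smul_smul,
    mul_inv_cancel₀ hr, one_smul]

namespace Quaternion

section CommRing

variable {R : Type*} [CommRing R]

@[simps] def i : ℍ[R] := ⟨0, 1, 0, 0⟩

@[simps] def j : ℍ[R] := ⟨0, 0, 1, 0⟩

@[simp] theorem i_mul_i : (i : ℍ[R]) * i = -1 := by ext <;> simp

@[simp] theorem j_mul_j : (j : ℍ[R]) * j = -1 := by ext <;> simp

theorem semiconjBy_i_j : SemiconjBy (i : ℍ[R]) j (-j) := by ext <;> simp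

theorem semiconjBy_j_i : SemiconjBy (j : ℍ[R]) i (-i) := by ext <;> simp

@[simp] theorem i_ne_zero [Nontrivial R] : (i : ℍ[R]) ≠ 0 := by simp [Quaternion.ext_iff]

@[simp] theorem j_ne_zero [Nontrivial R] : (j : ℍ[R]) ≠ 0 := by simp [Quaternion.ext_iff]

theorem algHom_apply_eq_conj_of_semiconjBy (f : ℍ[R] →ₐ[R] ℍ[R]) (u : ℍ[R]ˣ)
    (hi : SemiconjBy ↑u i (f i)) (hj : SemiconjBy ↑u j (f j)) (x : ℍ[R]) :
    f x = u * x * ↑u⁻¹ := by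
  let conj := (MulSemiringAction.toAlgEquiv R ℍ[R] (toConjAct u)).toAlgHom
  have hconj (y : ℍ[R]) : conj y = u * y * ↑u⁻¹ := units_smul_def _ _
  have hfi : f i = conj i := by rw [hconj, Units.eq_mul_inv_iff_mul_eq]; exact hi.symm
  have hfj : f j = conj j := by rw [hconj, Units.eq_mul_inv_iff_mul_eq]; exact hj.symm
  have : f = conj := Quaternion.hom_ext hfi hfj
  rw [this, hconj]

end CommRing

theorem exists_semiconjBy_i {q : ℍ[ℝ]} (hq : q * q = -1) :
    ∃ u : ℍ[ℝ], u ≠ 0 ∧ SemiconjBy u i q := by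
  by_cases h : q = -i
  · exact ⟨j, j_ne_zero, h ▸ semiconjBy_j_i⟩
  · exact ⟨i + q, fun h0 => h (eq_neg_of_add_eq_zero_right h0),
      semiconjBy_add_of_mul_self_eq_neg_one i_mul_i hq⟩

theorem exists_semiconjBy_j_commute_i {q : ℍ[ℝ]} (hq : q * q = -1) (hqi : SemiconjBy i q (-q)) :
    ∃ v : ℍ[ℝ], v ≠ 0 ∧ SemiconjBy v j q ∧ Commute v i := by
  by_cases h : q = -j
  · exact ⟨i, i_ne_zero, h ▸ semiconjBy_i_j, Commute.refl _⟩
  · refine ⟨(j + q) * -j, ?_, ?_, ?_⟩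
    · exact mul_ne_zero (fun h0 => h (eq_neg_of_add_eq_zero_right h0)) (neg_ne_zero.2 j_ne_zero)
    · exact (semiconjBy_add_of_mul_self_eq_neg_one j_mul_j hq).mul_left
        (Commute.refl _).neg_left
    · -- both factors anticommute with `i`
      have := (semiconjBy_i_j.add_right hqi).mul_right semiconjBy_i_j.neg_right
      rw [← neg_add, neg_mul_neg] at this
      exact this.symm

theorem exists_units_conj_of_apply_i (σ : ℍ[ℝ] →ₐ[ℝ] ℍ[ℝ]) (hσ : σ i = i) :
    ∃ v : ℍ[ℝ]ˣ, ∀ x, σ x = v * x * ↑v⁻¹ := by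
  have hq : σ j * σ j = -1 := by rw [← map_mul, j_mul_j, map_neg, map_one]
  have hqi : SemiconjBy i (σ j) (-σ j) := by
    rw [← hσ, ← map_neg]; exact semiconjBy_i_j.map σ
  obtain ⟨v, hv0, hvj, hvi⟩ := exists_semiconjBy_j_commute_i hq hqi
  exact ⟨Units.mk0 v hv0, algHom_apply_eq_conj_of_semiconjBy σ _ (by rw [hσ]; exact hvi) hvj⟩

theorem exists_units_conj (τ : ℍ[ℝ] →ₐ[ℝ] ℍ[ℝ]) : ∃ w : ℍ[ℝ]ˣ, ∀ x, τ x = w * x * ↑w⁻¹ := by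
  have hp : τ i * τ i = -1 := by rw [← map_mul, i_mul_i, map_neg, map_one]
  obtain ⟨u₀, hu0, hu⟩ := exists_semiconjBy_i hp
  set u := Units.mk0 u₀ hu0
  let σ := (MulSemiringAction.toAlgEquiv ℝ ℍ[ℝ] (toConjAct u⁻¹)).toAlgHom.comp τ
  have hσ (x : ℍ[ℝ]) : σ x = ↑u⁻¹ * τ x * u := by simp [σ, units_smul_def]
  obtain ⟨v, hv⟩ := exists_units_conj_of_apply_i σ (by
    rw [hσ, mul_assoc, Units.inv_mul_eq_iff_eq_mul]; exact hu.eq.symm)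
  refine ⟨u * v, fun x => ?_⟩
  have : τ x = u * σ x * ↑u⁻¹ := by simp [hσ, mul_assoc]
  rw [this, hv]
  simp [mul_assoc]

end Quaternion

/-- Every automorphism of the real quaternion algebra is inner, given by
conjugation with a unit quaternion. -/
theorem stmt0 (τ : Quaternion ℝ ≃ₐ[ℝ] Quaternion ℝ) :
    ∃ a : Quaternion ℝ, ‖a‖ = 1 ∧ ∀ x : Quaternion ℝ, τ x = a * x * a⁻¹ := by
  obtain ⟨w, hw⟩ := Quaternion.exists_units_conj τ.toAlgHom
  have hw0 : ‖(w : Quaternion ℝ)‖ ≠ 0 := norm_ne_zero_iff.2 w.ne_zero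
  refine ⟨‖(w : Quaternion ℝ)‖⁻¹ • (w : Quaternion ℝ), ?_, fun x => ?_⟩
  · rw [norm_smul, norm_inv, norm_norm, inv_mul_cancel₀ hw0]
  · rw [smul_mul_mul_inv_smul (inv_ne_zero hw0), ← Units.val_inv_eq_inv_val]
    exact hw x
end

section
/- Let V be a quaternionic vector space with admissible hypercomplex structure ρ, and set E₀ = ρ(1), E₁ = ρ(i), E₂ = ρ(j), E₃ = ρ(k). Define b : V × V → V ⊗ V by b(X,Y) = (1/2) Σ_{i=0}^{3} (E_i(X) ⊗ E_i(Y) + E_i(Y) ⊗ E_i(X)). Then b(X,Y) is invariant under J ⊗ J for every J ∈ Z_V, i.e., (J ⊗ J)(b(X,Y)) = b(X,Y) for all X, Y ∈ V and all admissible complex structures J ∈ Z_V. -/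
/-!
Left multiplication by a unit quaternion `q` is an isometry of `ℍ`, so it maps the orthonormal
basis `1, i, j, k` to another orthonormal basis. Since `(J ⊗ J)(ρ p X ⊗ ρ r Y) = ρ (q p) X ⊗ ρ (q r) Y`
for `J = ρ q`, applying `J ⊗ J` to `b(X,Y)` amounts to evaluating the trace `∑ᵢ B (eᵢ) (eᵢ)` of the
bilinear map `B p r = ρ p X ⊗ ρ r Y + ρ p Y ⊗ ρ r X` on this new basis, and such a trace does not
depend on the orthonormal basis (Parseval).
-/

open TensorProduct

/-- The projector `b(X,Y) = (1/2) Σᵢ (Eᵢ X ⊗ Eᵢ Y + Eᵢ Y ⊗ Eᵢ X)` onto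
Hermitian symmetric 2-tensors, where `E₀ = ρ(1)`, `E₁ = ρ(i)`, `E₂ = ρ(j)`,
`E₃ = ρ(k)`. -/
noncomputable def bForm {V : Type*} [AddCommGroup V] [Module ℝ V]
    (ρ : Quaternion ℝ →ₐ[ℝ] Module.End ℝ V) (X Y : V) : V ⊗[ℝ] V :=
  (2 : ℝ)⁻¹ •
    (ρ 1 X ⊗ₜ[ℝ] ρ 1 Y + ρ 1 Y ⊗ₜ[ℝ] ρ 1 X +
     (ρ ⟨0,1,0,0⟩ X ⊗ₜ[ℝ] ρ ⟨0,1,0,0⟩ Y + ρ ⟨0,1,0,0⟩ Y ⊗ₜ[ℝ] ρ ⟨0,1,0,0⟩ X) +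
     (ρ ⟨0,0,1,0⟩ X ⊗ₜ[ℝ] ρ ⟨0,0,1,0⟩ Y + ρ ⟨0,0,1,0⟩ Y ⊗ₜ[ℝ] ρ ⟨0,0,1,0⟩ X) +
     (ρ ⟨0,0,0,1⟩ X ⊗ₜ[ℝ] ρ ⟨0,0,0,1⟩ Y + ρ ⟨0,0,0,1⟩ Y ⊗ₜ[ℝ] ρ ⟨0,0,0,1⟩ X))

open scoped RealInnerProductSpace Quaternion

section BilinearTrace

variable {E M : Type*} [NormedAddCommGroup E] [InnerProductSpace ℝ E]
  [AddCommGroup M] [Module ℝ M] {ι ι' : Type*} [Fintype ι] [Fintype ι']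

theorem OrthonormalBasis.sum_bilin_self_eq (B : E →ₗ[ℝ] E →ₗ[ℝ] M)
    (b : OrthonormalBasis ι ℝ E) (b' : OrthonormalBasis ι' ℝ E) :
    ∑ i, B (b i) (b i) = ∑ j, B (b' j) (b' j) := by
  have expand (i : ι) :
      B (b i) (b i) = ∑ j, ∑ k, (⟪b' j, b i⟫ * ⟪b i, b' k⟫) • B (b' j) (b' k) := by
    conv_lhs => rw [← b'.sum_repr' (b i)]
    simp only [map_sum, map_smul, LinearMap.sum_apply, LinearMap.smul_apply, Finset.smul_sum,
      smul_smul]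
    rw [Finset.sum_comm]
    simp only [real_inner_comm (b i), mul_comm]
  simp only [expand]
  rw [Finset.sum_comm]
  refine Finset.sum_congr rfl fun j _ => ?_
  rw [Finset.sum_comm, Finset.sum_eq_single j]
  · rw [← Finset.sum_smul, b.sum_inner_mul_inner, real_inner_self_eq_norm_sq, b'.norm_eq_one,
      one_pow, one_smul]
  · intro k _ hk
    rw [← Finset.sum_smul, b.sum_inner_mul_inner, b'.orthonormal.2 (Ne.symm hk), zero_smul]
  · simp

end BilinearTrace

namespace Quaternion

noncomputable def mulLeftLinearIsometryEquiv (q : ℍ[ℝ]) (hq : ‖q‖ = 1) : ℍ[ℝ] ≃ₗᵢ[ℝ] ℍ[ℝ] :=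
  .ofSurjective
    { toLinearMap := LinearMap.mulLeft ℝ q
      norm_map' := fun x => by simp [norm_mul, hq] }
    fun y => ⟨q⁻¹ * y, by
      have : q ≠ 0 := norm_ne_zero_iff.mp (by rw [hq]; exact one_ne_zero)
      simp [mul_inv_cancel_left₀ this]⟩

@[simp]
theorem mulLeftLinearIsometryEquiv_apply (q : ℍ[ℝ]) (hq : ‖q‖ = 1) (p : ℍ[ℝ]) :
    mulLeftLinearIsometryEquiv q hq p = q * p := rfl

noncomputable def orthonormalBasisOneIJK : OrthonormalBasis (Fin 4) ℝ ℍ[ℝ] :=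
  (EuclideanSpace.basisFun (Fin 4) ℝ).map linearIsometryEquivTuple.symm

theorem coe_orthonormalBasisOneIJK :
    ⇑orthonormalBasisOneIJK = ![1, ⟨0, 1, 0, 0⟩, ⟨0, 0, 1, 0⟩, ⟨0, 0, 0, 1⟩] := by
  funext i
  fin_cases i <;> ext <;> simp [orthonormalBasisOneIJK]

end Quaternion

section TensorOrbit

variable {V : Type*} [AddCommGroup V] [Module ℝ V]

noncomputable def tensorOrbit (ρ : ℍ[ℝ] →ₐ[ℝ] Module.End ℝ V) (X Y : V) :
    ℍ[ℝ] →ₗ[ℝ] ℍ[ℝ] →ₗ[ℝ] V ⊗[ℝ] V :=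
  (TensorProduct.mk ℝ V V).compl₁₂ (LinearMap.applyₗ X ∘ₗ ρ.toLinearMap)
    (LinearMap.applyₗ Y ∘ₗ ρ.toLinearMap)

@[simp]
theorem tensorOrbit_apply (ρ : ℍ[ℝ] →ₐ[ℝ] Module.End ℝ V) (X Y : V) (p r : ℍ[ℝ]) :
    tensorOrbit ρ X Y p r = ρ p X ⊗ₜ ρ r Y := rfl

theorem map_tensorOrbit (ρ : ℍ[ℝ] →ₐ[ℝ] Module.End ℝ V) (X Y : V) (q p r : ℍ[ℝ]) :
    map (ρ q : V →ₗ[ℝ] V) (ρ q) (tensorOrbit ρ X Y p r) = tensorOrbit ρ X Y (q * p) (q * r) := by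
  simp [map_mul]

theorem bForm_eq_sum_orthonormalBasis (ρ : ℍ[ℝ] →ₐ[ℝ] Module.End ℝ V) (X Y : V) :
    bForm ρ X Y = (2 : ℝ)⁻¹ • ∑ i, (tensorOrbit ρ X Y + tensorOrbit ρ Y X)
      (Quaternion.orthonormalBasisOneIJK i) (Quaternion.orthonormalBasisOneIJK i) := by
  simp only [Quaternion.coe_orthonormalBasisOneIJK, Fin.sum_univ_four, LinearMap.add_apply,
    tensorOrbit_apply]
  rfl

end TensorOrbit

theorem stmt7_general {V : Type*} [AddCommGroup V] [Module ℝ V]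
    (ρ : Quaternion ℝ →ₐ[ℝ] Module.End ℝ V)
    (q : Quaternion ℝ) (hn : ‖q‖ = 1) (X Y : V) :
    TensorProduct.map (ρ q : V →ₗ[ℝ] V) (ρ q : V →ₗ[ℝ] V) (bForm ρ X Y) =
      bForm ρ X Y := by
  rw [bForm_eq_sum_orthonormalBasis, map_smul, map_sum]
  simp only [LinearMap.add_apply, map_add, map_tensorOrbit]
  congr 1
  open Quaternion in
  simpa using (orthonormalBasisOneIJK.map (mulLeftLinearIsometryEquiv q hn)).sum_bilin_self_eq
    (tensorOrbit ρ X Y + tensorOrbit ρ Y X) orthonormalBasisOneIJK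

/-- `b(X,Y)` is invariant under `J ⊗ J` for every admissible complex
structure `J = ρ(q)`, `q` a unit imaginary quaternion. -/
theorem stmt7 {V : Type*} [AddCommGroup V] [Module ℝ V]
    (ρ : Quaternion ℝ →ₐ[ℝ] Module.End ℝ V)
    (q : Quaternion ℝ) (hq : q.re = 0) (hn : ‖q‖ = 1) (X Y : V) :
    TensorProduct.map (ρ q : V →ₗ[ℝ] V) (ρ q : V →ₗ[ℝ] V) (bForm ρ X Y) =
      bForm ρ X Y :=
  stmt7_general ρ q hn X Y
end

section
/- Let V be a quaternionic vector space with admissible quaternionic triple (I,J,K) satisfying the quaternionic identities, and let V^{0,1;I} ⊆ V ⊗ ℂ be the (-i)-eigenspace of the complexification of I. Then for any α ∈ V* and any X, Y ∈ V^{0,1;I}, the contraction ι_α(b(X,Y)) = 0, where b(X,Y) = (1/2)[X⊗Y + Y⊗X + IX⊗IY + IY⊗IX + JX⊗JY + JY⊗JX + KX⊗KY + KY⊗KX] (extended complex-bilinearly) and ι_α contracts the first tensor factor with α. -/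
/-!
Since `I X = -i X`, the complexified relation `J I = -K` gives `K X = i J X`, and likewise for `Y`.
Hence the pairs `(I X, I Y)` and `(K X, K Y)` are the pairs `(X, Y)` and `(J X, J Y)` scaled by a
common square root of `-1`, and the symmetrized contraction, being quadratic in the scaling, turns
the `I`- and `K`-terms into the negatives of the `1`- and `J`-terms.
-/

theorem mul_rev_eq_neg_of_mul_mul_eq_neg_one {A : Type*} [Ring A] {i j k : A}
    (hi : i * i = -1) (hj : j * j = -1) (hijk : i * j * k = -1) : j * i = -k := by
  have hjk : j * k = i := by
    calc j * k = -(i * i) * (j * k) := by rw [hi]; noncomm_ring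
      _ = -i * (i * j * k) := by noncomm_ring
      _ = i := by rw [hijk]; noncomm_ring
  calc j * i = j * j * k := by rw [mul_assoc, hjk]
    _ = -k := by rw [hj]; noncomm_ring

section Contraction

variable {R V : Type*} [CommRing R] [AddCommGroup V] [Module R V]

theorem Module.End.apply_eq_neg_smul_of_mul_eq_neg {f g h : Module.End R V} (hgf : g * f = -h)
    {c : R} {v : V} (hv : f v = c • v) : h v = -c • g v := by
  have := congrArg (· v) hgf
  simp only [Module.End.mul_apply, LinearMap.neg_apply, hv, map_smul] at this
  rw [neg_smul, this, neg_neg]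

/-- `ι_α` applied to the symmetric tensor `u ⊗ v + v ⊗ u`. -/
def symmContract (α : V →ₗ[R] R) (u v : V) : V := α u • v + α v • u

theorem symmContract_smul (α : V →ₗ[R] R) (c : R) (u v : V) :
    symmContract α (c • u) (c • v) = (c * c) • symmContract α u v := by
  simp only [symmContract, map_smul, smul_eq_mul, smul_add, smul_smul]
  ring_nf

theorem symmContract_smul_of_mul_self_eq_neg_one (α : V →ₗ[R] R) {c : R} (hc : c * c = -1)
    (u v : V) : symmContract α (c • u) (c • v) = -symmContract α u v := by
  rw [symmContract_smul, hc, neg_one_smul]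

end Contraction

theorem stmt8_general {V : Type*} [AddCommGroup V] [Module ℂ V]
    (I J K : Module.End ℂ V)
    (hI : I * I = -1) (hJ : J * J = -1)
    (hIJK : I * J * K = -1)
    (X Y : V) (hX : I X = (-Complex.I) • X) (hY : I Y = (-Complex.I) • Y)
    (α : V →ₗ[ℂ] ℂ) :
    (2 : ℂ)⁻¹ •
      (α X • Y + α Y • X + α (I X) • I Y + α (I Y) • I X +
       α (J X) • J Y + α (J Y) • J X + α (K X) • K Y + α (K Y) • K X) = 0 := by
  have hJI := mul_rev_eq_neg_of_mul_mul_eq_neg_one hI hJ hIJK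
  have hKX : K X = Complex.I • J X := by
    simpa using Module.End.apply_eq_neg_smul_of_mul_eq_neg hJI hX
  have hKY : K Y = Complex.I • J Y := by
    simpa using Module.End.apply_eq_neg_smul_of_mul_eq_neg hJI hY
  have hsum : α X • Y + α Y • X + α (I X) • I Y + α (I Y) • I X +
      α (J X) • J Y + α (J Y) • J X + α (K X) • K Y + α (K Y) • K X =
      symmContract α X Y + symmContract α (I X) (I Y) +
        symmContract α (J X) (J Y) + symmContract α (K X) (K Y) := by
    simp only [symmContract]; abel
  have hneg : (-Complex.I) * (-Complex.I) = -1 := by rw [neg_mul_neg, Complex.I_mul_I]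
  rw [hsum, hX, hY, hKX, hKY, symmContract_smul_of_mul_self_eq_neg_one α hneg,
    symmContract_smul_of_mul_self_eq_neg_one α Complex.I_mul_I]
  simp

/-- For an admissible quaternionic triple `(I,J,K)` (complexified) and
`X, Y ∈ V^{0,1;I}`, the contraction `ι_α(b(X,Y))` vanishes for every `α`. -/
theorem stmt8 {V : Type*} [AddCommGroup V] [Module ℂ V]
    (I J K : Module.End ℂ V)
    (hI : I * I = -1) (hJ : J * J = -1) (hK : K * K = -1)
    (hIJK : I * J * K = -1)
    (X Y : V) (hX : I X = (-Complex.I) • X) (hY : I Y = (-Complex.I) • Y)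
    (α : V →ₗ[ℂ] ℂ) :
    (2 : ℂ)⁻¹ •
      (α X • Y + α Y • X + α (I X) • I Y + α (I Y) • I X +
       α (J X) • J Y + α (J Y) • J X + α (K X) • K Y + α (K Y) • K X) = 0 :=
  stmt8_general I J K hI hJ hIJK X Y hX hY α
end

section
/- Let V be a quaternionic vector space, I, J, K an admissible quaternionic triple, X ∈ V^{1,0;J} (the i-eigenspace of J on V⊗ℂ) and Y ∈ V^{0,1;J} (the (-i)-eigenspace). Then for any α ∈ V*, ι_α(b(X,Y)) = α(X)Y + α(Y)X + α(KX)KY + α(KY)KX. -/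
/-! On `V^{1,0;J}` and `V^{0,1;J}` the operator `J` acts by the scalars `i` and `-i`, and `K = IJ`
acts as `I` followed by the same scalars. Since `i · (-i) = 1`, the `J`-summand of `ι_α(b(X,Y))`
equals its `Id`-summand and the `I`-summand equals its `K`-summand, so the factor `1/2` is exactly
cancelled. -/

theorem mul_eq_of_mul_mul_eq_neg_one {R : Type*} [Ring R] {a b c : R}
    (habc : a * b * c = -1) (hc : c * c = -1) : a * b = c := by
  calc a * b = -(a * b * (c * c)) := by rw [hc]; simp
    _ = -(a * b * c * c) := by rw [mul_assoc (a * b)]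
    _ = c := by rw [habc]; simp

theorem apply_smul_apply_of_eq_smul {R M : Type*} [CommRing R] [AddCommGroup M] [Module R M]
    (α : M →ₗ[R] R) {x y x' y' : M} {c d : R} (hcd : c * d = 1)
    (hx : x = c • x') (hy : y = d • y') : α x • y = α x' • y' := by
  rw [hx, hy, map_smul, smul_smul, smul_eq_mul, mul_right_comm, hcd, one_mul]

theorem stmt9_general {V : Type*} [AddCommGroup V] [Module ℂ V]
    (I J K : Module.End ℂ V)
    (hK : K * K = -1)
    (hIJK : I * J * K = -1)
    (X Y : V) (hX : J X = Complex.I • X) (hY : J Y = (-Complex.I) • Y)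
    (α : V →ₗ[ℂ] ℂ) :
    (2 : ℂ)⁻¹ •
      (α X • Y + α Y • X + α (I X) • I Y + α (I Y) • I X +
       α (J X) • J Y + α (J Y) • J X + α (K X) • K Y + α (K Y) • K X) =
    α X • Y + α Y • X + α (K X) • K Y + α (K Y) • K X := by
  have hIJ : I * J = K := mul_eq_of_mul_mul_eq_neg_one hIJK hK
  have hKX : K X = Complex.I • I X := by rw [← hIJ, Module.End.mul_apply, hX, map_smul]
  have hKY : K Y = (-Complex.I) • I Y := by rw [← hIJ, Module.End.mul_apply, hY, map_smul]
  have hi : Complex.I * -Complex.I = 1 := by simp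
  have hi' : -Complex.I * Complex.I = 1 := by simp
  rw [apply_smul_apply_of_eq_smul α hi hX hY, apply_smul_apply_of_eq_smul α hi' hY hX,
    ← apply_smul_apply_of_eq_smul α hi hKX hKY, ← apply_smul_apply_of_eq_smul α hi' hKY hKX]
  module

/-- For an admissible quaternionic triple `(I,J,K)` (complexified),
`X ∈ V^{1,0;J}` and `Y ∈ V^{0,1;J}`, the contraction `ι_α(b(X,Y))` equals
`α(X)Y + α(Y)X + α(KX)KY + α(KY)KX`. -/
theorem stmt9 {V : Type*} [AddCommGroup V] [Module ℂ V]
    (I J K : Module.End ℂ V)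
    (hI : I * I = -1) (hJ : J * J = -1) (hK : K * K = -1)
    (hIJK : I * J * K = -1)
    (X Y : V) (hX : J X = Complex.I • X) (hY : J Y = (-Complex.I) • Y)
    (α : V →ₗ[ℂ] ℂ) :
    (2 : ℂ)⁻¹ •
      (α X • Y + α Y • X + α (I X) • I Y + α (I Y) • I X +
       α (J X) • J Y + α (J Y) • J X + α (K X) • K Y + α (K Y) • K X) =
    α X • Y + α Y • X + α (K X) • K Y + α (K Y) • K X :=
  stmt9_general I J K hK hIJK X Y hX hY α
end

section
/- Let V, W be quaternionic vector spaces, T : Z_V → Z_W an orientation-preserving isometry (extended to a linear isometry Q_V → Q_W), and (I,J,K) a positive orthonormal basis of Q_V. Define the ℝ-linear operator C_T on Hom_ℝ(V,W) by C_T(t) = T(I) ∘ t ∘ I + T(J) ∘ t ∘ J + T(K) ∘ t ∘ K. Then C_T is independent of the choice of positive orthonormal basis (I,J,K) of Q_V. -/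
/-!
`C_T(t)` is the contraction `∑ᵢ B (Fᵢ, Eᵢ)` of the bilinear map `B (F, E) = F ∘ t ∘ E`.
Replacing both frames by their images under the same matrix `R` turns it into
`∑ⱼₖ (RᵀR)ⱼₖ B (Fⱼ, Eₖ)`, which is the original contraction when `R` is orthogonal.
-/

theorem LinearMap.sum_apply₂_smul_sum_of_transpose_mul_self {ι 𝕜 M N P : Type*} [Fintype ι]
    [DecidableEq ι] [CommSemiring 𝕜] [AddCommMonoid M] [AddCommMonoid N] [AddCommMonoid P]
    [Module 𝕜 M] [Module 𝕜 N] [Module 𝕜 P] (B : M →ₗ[𝕜] N →ₗ[𝕜] P) {R : Matrix ι ι 𝕜}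
    (hR : R.transpose * R = 1) (x : ι → M) (y : ι → N) :
    ∑ i, B (∑ j, R i j • x j) (∑ k, R i k • y k) = ∑ i, B (x i) (y i) := by
  calc ∑ i, B (∑ j, R i j • x j) (∑ k, R i k • y k)
      = ∑ i, ∑ j, ∑ k, (R i j * R i k) • B (x j) (y k) := by
        simp only [map_sum, map_smul, LinearMap.sum_apply, LinearMap.smul_apply,
          Finset.smul_sum, smul_smul]
        refine Finset.sum_congr rfl fun i _ => ?_
        rw [Finset.sum_comm]
        simp only [mul_comm]
    _ = ∑ j, ∑ k, (R.transpose * R) j k • B (x j) (y k) := by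
        simp only [Matrix.mul_apply, Matrix.transpose_apply, Finset.sum_smul]
        rw [Finset.sum_comm]
        exact Finset.sum_congr rfl fun j _ => Finset.sum_comm
    _ = ∑ i, B (x i) (y i) := by simp [hR, Matrix.one_apply]

theorem stmt10_general {V W : Type*} [AddCommGroup V] [Module ℝ V]
    [AddCommGroup W] [Module ℝ W]
    (E E' : Fin 3 → Module.End ℝ V) (F F' : Fin 3 → Module.End ℝ W)
    (R : Matrix (Fin 3) (Fin 3) ℝ)
    (hR : R.transpose * R = 1)
    (hrelE : ∀ i, E' i = ∑ j, R i j • E j)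
    (hrelF : ∀ i, F' i = ∑ j, R i j • F j)
    (t : V →ₗ[ℝ] W) :
    ∑ i, (F i : W →ₗ[ℝ] W) ∘ₗ t ∘ₗ (E i : V →ₗ[ℝ] V) =
      ∑ i, (F' i : W →ₗ[ℝ] W) ∘ₗ t ∘ₗ (E' i : V →ₗ[ℝ] V) := by
  let sandwich : Module.End ℝ W →ₗ[ℝ] Module.End ℝ V →ₗ[ℝ] V →ₗ[ℝ] W :=
    (LinearMap.llcomp ℝ V W W).compl₂ (LinearMap.llcomp ℝ V V W t)
  simp only [hrelE, hrelF]
  exact (sandwich.sum_apply₂_smul_sum_of_transpose_mul_self hR F E).symm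

/-- The operator `C_T(t) = Σᵢ T(Eᵢ) ∘ t ∘ Eᵢ` does not depend on the choice
of positive orthonormal basis `(E₀,E₁,E₂)` of `Q_V`: two such bases are
related by a rotation `R ∈ SO(3)`, and since `T` is a linear isometry the
corresponding bases of `Q_W` are related by the same `R`. -/
theorem stmt10 {V W : Type*} [AddCommGroup V] [Module ℝ V]
    [AddCommGroup W] [Module ℝ W]
    (E E' : Fin 3 → Module.End ℝ V) (F F' : Fin 3 → Module.End ℝ W)
    (hE2 : ∀ i, E i * E i = -1) (hE : E 0 * E 1 * E 2 = -1)
    (hE'2 : ∀ i, E' i * E' i = -1) (hE' : E' 0 * E' 1 * E' 2 = -1)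
    (hF2 : ∀ i, F i * F i = -1) (hF : F 0 * F 1 * F 2 = -1)
    (hF'2 : ∀ i, F' i * F' i = -1) (hF' : F' 0 * F' 1 * F' 2 = -1)
    (R : Matrix (Fin 3) (Fin 3) ℝ)
    (hR : R.transpose * R = 1) (hdet : R.det = 1)
    (hrelE : ∀ i, E' i = ∑ j, R i j • E j)
    (hrelF : ∀ i, F' i = ∑ j, R i j • F j)
    (t : V →ₗ[ℝ] W) :
    ∑ i, (F i : W →ₗ[ℝ] W) ∘ₗ t ∘ₗ (E i : V →ₗ[ℝ] V) =
      ∑ i, (F' i : W →ₗ[ℝ] W) ∘ₗ t ∘ₗ (E' i : V →ₗ[ℝ] V) :=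
  stmt10_general E E' F F' R hR hrelE hrelF t
end

section
/- With V, W quaternionic vector spaces and T : Z_V → Z_W an orientation-preserving isometry, the operator C_T(t) = T(I)∘t∘I + T(J)∘t∘J + T(K)∘t∘K on Hom_ℝ(V,W) (with (I,J,K) a positive orthonormal basis of Q_V) satisfies the quadratic equation C_T² + 2 C_T - 3·Id = 0. -/
/-!
Write `C_T = Σ_a L_{a'} R_a` over `a ∈ {I, J, K}`, where `L` and `R` are post- and precomposition.
Then `C_T² = Σ_{a,b} L_{a'b'} R_{ba}`: the three diagonal terms are `L_{-1} R_{-1} = id`, and the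
quaternion relations pair off the six others, e.g. `L_{I'J'} R_{JI} + L_{J'I'} R_{IJ} = -2 L_{K'} R_K`.
Hence `C_T² = 3 - 2 C_T`.
-/

/-- The operator `C_T(t) = T(I)∘t∘I + T(J)∘t∘J + T(K)∘t∘K`. -/
def fueterOp {V W : Type*} [AddCommGroup V] [Module ℝ V]
    [AddCommGroup W] [Module ℝ W]
    (I J K : Module.End ℝ V) (I' J' K' : Module.End ℝ W)
    (t : V →ₗ[ℝ] W) : V →ₗ[ℝ] W :=
  (I' : W →ₗ[ℝ] W) ∘ₗ t ∘ₗ (I : V →ₗ[ℝ] V) +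
  (J' : W →ₗ[ℝ] W) ∘ₗ t ∘ₗ (J : V →ₗ[ℝ] V) +
  (K' : W →ₗ[ℝ] W) ∘ₗ t ∘ₗ (K : V →ₗ[ℝ] V)

theorem quaternion_mul_table {R : Type*} [Ring R] {I J K : R}
    (hI : I * I = -1) (hJ : J * J = -1) (hK : K * K = -1) (hIJK : I * J * K = -1) :
    I * J = K ∧ J * I = -K ∧ J * K = I ∧ K * J = -I ∧ K * I = J ∧ I * K = -J := by
  have hIJ : I * J = K :=
    calc I * J = -(I * J * K * K) := by rw [mul_assoc (I * J), hK]; noncomm_ring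
      _ = K := by rw [hIJK]; noncomm_ring
  have hKJ : K * J = -I :=
    calc K * J = I * J * J := by rw [hIJ]
      _ = -I := by rw [mul_assoc, hJ, mul_neg_one]
  have hIK : I * K = -J :=
    calc I * K = I * (I * J) := by rw [hIJ]
      _ = -J := by rw [← mul_assoc, hI, neg_one_mul]
  have hJK : J * K = I :=
    calc J * K = -(I * K) * K := by rw [hIK, neg_neg]
      _ = I := by rw [neg_mul, mul_assoc, hK, mul_neg_one, neg_neg]
  have hKI : K * I = J :=
    calc K * I = K * (J * K) := by rw [hJK]
      _ = -(I * K) := by rw [← mul_assoc, hKJ, neg_mul]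
      _ = J := by rw [hIK, neg_neg]
  have hJI : J * I = -K :=
    calc J * I = J * (J * K) := by rw [hJK]
      _ = -K := by rw [← mul_assoc, hJ, neg_one_mul]
  exact ⟨hIJ, hJI, hJK, hKJ, hKI, hIK⟩

theorem LinearMap.comp_comp_comp_comp_eq_mul {R V W : Type*} [Semiring R]
    [AddCommMonoid V] [Module R V] [AddCommMonoid W] [Module R W]
    (A B : Module.End R W) (C D : Module.End R V) (t : V →ₗ[R] W) :
    A ∘ₗ (B ∘ₗ t ∘ₗ C) ∘ₗ D = (A * B) ∘ₗ t ∘ₗ (C * D) :=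
  rfl

theorem fueterOp_fueterOp {V W : Type*} [AddCommGroup V] [Module ℝ V]
    [AddCommGroup W] [Module ℝ W]
    {I J K : Module.End ℝ V} {I' J' K' : Module.End ℝ W}
    (hI : I * I = -1) (hJ : J * J = -1) (hK : K * K = -1) (hIJK : I * J * K = -1)
    (hI' : I' * I' = -1) (hJ' : J' * J' = -1) (hK' : K' * K' = -1)
    (hIJK' : I' * J' * K' = -1) (t : V →ₗ[ℝ] W) :
    fueterOp I J K I' J' K' (fueterOp I J K I' J' K' t) =
      (3 : ℝ) • t - (2 : ℝ) • fueterOp I J K I' J' K' t := by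
  obtain ⟨hIJ, hJI, hJK, hKJ, hKI, hIK⟩ := quaternion_mul_table hI hJ hK hIJK
  obtain ⟨hIJ', hJI', hJK', hKJ', hKI', hIK'⟩ := quaternion_mul_table hI' hJ' hK' hIJK'
  simp only [fueterOp, LinearMap.comp_add, LinearMap.add_comp, LinearMap.comp_comp_comp_comp_eq_mul,
    hIJ, hJI, hJK, hKJ, hKI, hIK, hI, hJ, hK, hIJ', hJI', hJK', hKJ', hKI', hIK', hI', hJ', hK',
    LinearMap.neg_comp, LinearMap.comp_neg, Module.End.one_eq_id, LinearMap.id_comp,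
    LinearMap.comp_id, neg_neg]
  module

/-- `C_T` satisfies the quadratic equation `C_T² + 2 C_T - 3 = 0`. -/
theorem stmt11 {V W : Type*} [AddCommGroup V] [Module ℝ V]
    [AddCommGroup W] [Module ℝ W]
    (I J K : Module.End ℝ V) (I' J' K' : Module.End ℝ W)
    (hI : I * I = -1) (hJ : J * J = -1) (hK : K * K = -1) (hIJK : I * J * K = -1)
    (hI' : I' * I' = -1) (hJ' : J' * J' = -1) (hK' : K' * K' = -1)
    (hIJK' : I' * J' * K' = -1)
    (t : V →ₗ[ℝ] W) :
    fueterOp I J K I' J' K' (fueterOp I J K I' J' K' t) +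
      (2 : ℝ) • fueterOp I J K I' J' K' t - (3 : ℝ) • t = 0 := by
  rw [fueterOp_fueterOp hI hJ hK hIJK hI' hJ' hK' hIJK']
  module
end

section
/- Let V, W be quaternionic vector spaces, T : Q_V → Q_W an orientation-preserving linear isometry, and d ⊆ Q_V a line through the origin with S_d : Q_V → Q_V the orthogonal symmetry (reflection) in d. Then every linear map t : V → W that is quaternionic with respect to T ∘ S_d is Fueter-quaternionic with respect to T, i.e., 𝒬_{T∘S_d} ⊆ ℱ_T. -/
section ComplexStructure

variable {R V W : Type*} [Ring R] [AddCommGroup V] [Module R V] [AddCommGroup W] [Module R W]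
  {A : Module.End R V} {B : Module.End R W} {t : V →ₗ[R] W}

theorem comp_comp_eq_neg_of_intertwines (hB : B * B = -1) (h : t ∘ₗ A = B ∘ₗ t) :
    B ∘ₗ t ∘ₗ A = -t := by
  rw [h, ← LinearMap.comp_assoc]
  change (B * B) ∘ₗ t = -t
  rw [hB, LinearMap.neg_comp]
  rfl

theorem comp_comp_eq_of_anti_intertwines (hB : B * B = -1) (h : t ∘ₗ A = -(B ∘ₗ t)) :
    B ∘ₗ t ∘ₗ A = t := by
  have h_neg : t ∘ₗ (-A) = B ∘ₗ t := by rw [LinearMap.comp_neg, h, neg_neg]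
  have := comp_comp_eq_neg_of_intertwines hB h_neg
  rwa [LinearMap.comp_neg, LinearMap.comp_neg, neg_inj] at this

end ComplexStructure

theorem stmt13_general {V W : Type*} [AddCommGroup V] [Module ℝ V]
    [AddCommGroup W] [Module ℝ W]
    (I J K : Module.End ℝ V) (I' J' K' : Module.End ℝ W)
    (hI' : I' * I' = -1) (hJ' : J' * J' = -1) (hK' : K' * K' = -1)
    (t : V →ₗ[ℝ] W)
    (h1 : t ∘ₗ (I : V →ₗ[ℝ] V) = (I' : W →ₗ[ℝ] W) ∘ₗ t)
    (h2 : t ∘ₗ (J : V →ₗ[ℝ] V) = -((J' : W →ₗ[ℝ] W) ∘ₗ t))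
    (h3 : t ∘ₗ (K : V →ₗ[ℝ] V) = -((K' : W →ₗ[ℝ] W) ∘ₗ t)) :
    fueterOp I J K I' J' K' t = t := by
  rw [fueterOp, comp_comp_eq_neg_of_intertwines hI' h1,
    comp_comp_eq_of_anti_intertwines hJ' h2, comp_comp_eq_of_anti_intertwines hK' h3]
  abel

/-- `𝒬_{T∘S_d} ⊆ ℱ_T`: a map that is quaternionic with respect to `T ∘ S_d`,
where `S_d` is the reflection in a line `d ⊆ Q_V`, is Fueter-quaternionic with
respect to `T`. Here the positive orthonormal basis `(I,J,K)` of `Q_V` is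
chosen with `I` spanning `d`, so that `S_d(I) = I`, `S_d(J) = -J`,
`S_d(K) = -K`, and `(I',J',K') = (T(I),T(J),T(K))`. -/
theorem stmt13 {V W : Type*} [AddCommGroup V] [Module ℝ V]
    [AddCommGroup W] [Module ℝ W]
    (I J K : Module.End ℝ V) (I' J' K' : Module.End ℝ W)
    (hI : I * I = -1) (hJ : J * J = -1) (hK : K * K = -1) (hIJK : I * J * K = -1)
    (hI' : I' * I' = -1) (hJ' : J' * J' = -1) (hK' : K' * K' = -1)
    (hIJK' : I' * J' * K' = -1)
    (t : V →ₗ[ℝ] W)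
    (h1 : t ∘ₗ (I : V →ₗ[ℝ] V) = (I' : W →ₗ[ℝ] W) ∘ₗ t)
    (h2 : t ∘ₗ (J : V →ₗ[ℝ] V) = -((J' : W →ₗ[ℝ] W) ∘ₗ t))
    (h3 : t ∘ₗ (K : V →ₗ[ℝ] V) = -((K' : W →ₗ[ℝ] W) ∘ₗ t)) :
    fueterOp I J K I' J' K' t = t :=
  stmt13_general I J K I' J' K' hI' hJ' hK' t h1 h2 h3
end

section
/- Let U, V, W be quaternionic vector spaces, T' : Q_U → Q_V and T'' : Q_V → Q_W orientation-preserving linear isometries, d ⊆ Q_V a line through the origin, and S_d the reflection of Q_V in d. If t' : U → V is linear quaternionic with respect to S_d ∘ T' and t'' : V → W is linear quaternionic with respect to T'' ∘ S_d, then t'' ∘ t' is Fueter-quaternionic with respect to T'' ∘ T' if and only if t'' ∘ t' = 0. -/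
namespace LinearMap

variable {R U V W : Type*} [Ring R] [AddCommGroup U] [Module R U] [AddCommGroup V] [Module R V]
  [AddCommGroup W] [Module R W]

theorem comp_comp_eq_of_comp_eq {A : Module.End R U} {B : Module.End R V}
    {C : Module.End R W} {t' : U →ₗ[R] V} {t'' : V →ₗ[R] W}
    (h : t' ∘ₗ A = B ∘ₗ t') (g : t'' ∘ₗ B = C ∘ₗ t'') :
    (t'' ∘ₗ t') ∘ₗ A = C ∘ₗ (t'' ∘ₗ t') := by
  rw [comp_assoc, h, ← comp_assoc, g, comp_assoc]

theorem comp_comp_eq_of_comp_eq_neg {A : Module.End R U} {B : Module.End R V}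
    {C : Module.End R W} {t' : U →ₗ[R] V} {t'' : V →ₗ[R] W}
    (h : t' ∘ₗ A = -(B ∘ₗ t')) (g : t'' ∘ₗ B = -(C ∘ₗ t'')) :
    (t'' ∘ₗ t') ∘ₗ A = C ∘ₗ (t'' ∘ₗ t') := by
  rw [comp_assoc, h, comp_neg, ← comp_assoc, g, neg_comp, neg_neg, comp_assoc]

theorem comp_comp_eq_neg_of_comp_eq {A : Module.End R V} {B : Module.End R W}
    {t : V →ₗ[R] W} (hB : B * B = -1) (h : t ∘ₗ A = B ∘ₗ t) :
    B ∘ₗ t ∘ₗ A = -t := by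
  rw [h, ← comp_assoc, ← Module.End.mul_eq_comp, hB, neg_comp, Module.End.one_eq_id, id_comp]

end LinearMap

theorem fueterOp_eq_neg_three_smul {V W : Type*} [AddCommGroup V] [Module ℝ V]
    [AddCommGroup W] [Module ℝ W] {I J K : Module.End ℝ V} {I' J' K' : Module.End ℝ W}
    {t : V →ₗ[ℝ] W} (hI' : I' * I' = -1) (hJ' : J' * J' = -1) (hK' : K' * K' = -1)
    (hI : t ∘ₗ I = I' ∘ₗ t) (hJ : t ∘ₗ J = J' ∘ₗ t) (hK : t ∘ₗ K = K' ∘ₗ t) :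
    fueterOp I J K I' J' K' t = (-3 : ℝ) • t := by
  rw [fueterOp, LinearMap.comp_comp_eq_neg_of_comp_eq hI' hI,
    LinearMap.comp_comp_eq_neg_of_comp_eq hJ' hJ, LinearMap.comp_comp_eq_neg_of_comp_eq hK' hK]
  module

theorem neg_three_smul_eq_self_iff {K M : Type*} [Field K] [CharZero K] [AddCommGroup M]
    [Module K M] {x : M} : (-3 : K) • x = x ↔ x = 0 := by
  constructor
  · intro h
    have h4 : (4 : K) • x = 0 := by linear_combination (norm := module) -h
    simpa using h4
  · rintro rfl
    exact smul_zero _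

theorem stmt14_general {U V W : Type*} [AddCommGroup U] [Module ℝ U]
    [AddCommGroup V] [Module ℝ V] [AddCommGroup W] [Module ℝ W]
    (I₀ J₀ K₀ : Module.End ℝ U) (I J K : Module.End ℝ V)
    (I' J' K' : Module.End ℝ W)
    (hI' : I' * I' = -1) (hJ' : J' * J' = -1) (hK' : K' * K' = -1)
    (t' : U →ₗ[ℝ] V) (t'' : V →ₗ[ℝ] W)
    (h1 : t' ∘ₗ (I₀ : U →ₗ[ℝ] U) = (I : V →ₗ[ℝ] V) ∘ₗ t')
    (h2 : t' ∘ₗ (J₀ : U →ₗ[ℝ] U) = -((J : V →ₗ[ℝ] V) ∘ₗ t'))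
    (h3 : t' ∘ₗ (K₀ : U →ₗ[ℝ] U) = -((K : V →ₗ[ℝ] V) ∘ₗ t'))
    (g1 : t'' ∘ₗ (I : V →ₗ[ℝ] V) = (I' : W →ₗ[ℝ] W) ∘ₗ t'')
    (g2 : t'' ∘ₗ (J : V →ₗ[ℝ] V) = -((J' : W →ₗ[ℝ] W) ∘ₗ t''))
    (g3 : t'' ∘ₗ (K : V →ₗ[ℝ] V) = -((K' : W →ₗ[ℝ] W) ∘ₗ t'')) :
    fueterOp I₀ J₀ K₀ I' J' K' (t'' ∘ₗ t') = t'' ∘ₗ t' ↔ t'' ∘ₗ t' = 0 := by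
  rw [fueterOp_eq_neg_three_smul hI' hJ' hK' (LinearMap.comp_comp_eq_of_comp_eq h1 g1)
    (LinearMap.comp_comp_eq_of_comp_eq_neg h2 g2) (LinearMap.comp_comp_eq_of_comp_eq_neg h3 g3)]
  exact neg_three_smul_eq_self_iff

/-- If `t' : U → V` is quaternionic with respect to `S_d ∘ T'` and
`t'' : V → W` is quaternionic with respect to `T'' ∘ S_d`, then `t'' ∘ t'` is
Fueter-quaternionic with respect to `T'' ∘ T'` if and only if `t'' ∘ t' = 0`.
Bases are chosen so that `(I,J,K) = (T'(I₀),T'(J₀),T'(K₀))` with `I` spanning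
`d`, and `(I',J',K') = (T''(I),T''(J),T''(K))`; the reflection `S_d` fixes `I`
and negates `J`, `K`. -/
theorem stmt14 {U V W : Type*} [AddCommGroup U] [Module ℝ U]
    [AddCommGroup V] [Module ℝ V] [AddCommGroup W] [Module ℝ W]
    (I₀ J₀ K₀ : Module.End ℝ U) (I J K : Module.End ℝ V)
    (I' J' K' : Module.End ℝ W)
    (hI₀ : I₀ * I₀ = -1) (hJ₀ : J₀ * J₀ = -1) (hK₀ : K₀ * K₀ = -1)
    (hIJK₀ : I₀ * J₀ * K₀ = -1)
    (hI : I * I = -1) (hJ : J * J = -1) (hK : K * K = -1) (hIJK : I * J * K = -1)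
    (hI' : I' * I' = -1) (hJ' : J' * J' = -1) (hK' : K' * K' = -1)
    (hIJK' : I' * J' * K' = -1)
    (t' : U →ₗ[ℝ] V) (t'' : V →ₗ[ℝ] W)
    (h1 : t' ∘ₗ (I₀ : U →ₗ[ℝ] U) = (I : V →ₗ[ℝ] V) ∘ₗ t')
    (h2 : t' ∘ₗ (J₀ : U →ₗ[ℝ] U) = -((J : V →ₗ[ℝ] V) ∘ₗ t'))
    (h3 : t' ∘ₗ (K₀ : U →ₗ[ℝ] U) = -((K : V →ₗ[ℝ] V) ∘ₗ t'))
    (g1 : t'' ∘ₗ (I : V →ₗ[ℝ] V) = (I' : W →ₗ[ℝ] W) ∘ₗ t'')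
    (g2 : t'' ∘ₗ (J : V →ₗ[ℝ] V) = -((J' : W →ₗ[ℝ] W) ∘ₗ t''))
    (g3 : t'' ∘ₗ (K : V →ₗ[ℝ] V) = -((K' : W →ₗ[ℝ] W) ∘ₗ t'')) :
    fueterOp I₀ J₀ K₀ I' J' K' (t'' ∘ₗ t') = t'' ∘ₗ t' ↔ t'' ∘ₗ t' = 0 :=
  stmt14_general I₀ J₀ K₀ I J K I' J' K' hI' hJ' hK' t' t'' h1 h2 h3 g1 g2 g3
end

section
/- Let V be a quaternionic vector space with admissible endomorphisms forming the unit sphere Z_V, and let W ⊆ V be a real subspace such that J(W) ⊆ W for every J ∈ Z_V. Then for any symmetric bilinear map B : W × W → V/W satisfying B(X, JY) = J̄ B(X,Y) for all J ∈ Z_V and X, Y ∈ W (where J̄ is the induced endomorphism of V/W), one has B = 0. -/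
/-!
Each unit imaginary quaternion `q` acts on `V` by a complex structure `J = ρ q` preserving `W`,
and `J̄` squares to `-1` on `V ⧸ W`. Moving `J` across the symmetric form `B` twice gives
`B (J X) (J Y) = J̄² B X Y = -B X Y`. For orthogonal unit imaginary `i`, `j` the product `i * j`
is again a unit imaginary quaternion, so `B X Y = -B (ρ j X) (ρ j Y) = B (ρ (i * j) X) (ρ (i * j) Y)`,
which is also `-B X Y`; hence `B = 0`.
-/

section

variable {R M N : Type*} [CommRing R] [AddCommGroup M] [Module R M] [AddCommGroup N] [Module R N]

theorem LinearMap.apply_apply_eq_neg_of_apply_right_eq {B : M →ₗ[R] M →ₗ[R] N}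
    (hB : ∀ x y, B x y = B y x) {f : Module.End R M} {g : Module.End R N}
    (hfg : ∀ x y, B x (f y) = g (B x y)) (hg : ∀ z, g (g z) = -z) (x y : M) :
    B (f x) (f y) = -B x y := by
  rw [hfg, hB, hfg, hg, hB]

theorem LinearMap.eq_zero_of_apply_apply_eq_neg_of_comp [IsAddTorsionFree N]
    {B : M →ₗ[R] M →ₗ[R] N} {f g k : Module.End R M}
    (hf : ∀ x y, B (f x) (f y) = -B x y) (hg : ∀ x y, B (g x) (g y) = -B x y)
    (hk : ∀ x y, B (k x) (k y) = -B x y) (hfgk : ∀ x, k x = f (g x)) : B = 0 := by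
  ext x y
  refine self_eq_neg.mp ?_
  calc B x y = -B (g x) (g y) := by rw [hg, neg_neg]
    _ = B (k x) (k y) := by rw [hfgk, hfgk, hf]
    _ = -B x y := hk x y

theorem Submodule.mapQ_mapQ_of_mul_self_eq_neg_one {p : Submodule R M} {f : Module.End R M}
    (hf : f * f = -1) (h : p ≤ p.comap f) (x : M ⧸ p) :
    p.mapQ p f h (p.mapQ p f h x) = -x := by
  induction x using Submodule.Quotient.induction_on with
  | H v => simp [← Module.End.mul_apply, hf]

end

namespace Quaternion

theorem norm_eq_one_iff_normSq_eq_one {q : ℍ[ℝ]} : ‖q‖ = 1 ↔ normSq q = 1 := by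
  rw [← pow_eq_one_iff_of_nonneg (norm_nonneg q) two_ne_zero, sq, normSq_eq_norm_mul_self]

theorem mul_self_eq_neg_one {q : ℍ[ℝ]} (hre : q.re = 0) (hn : ‖q‖ = 1) : q * q = -1 := by
  calc q * q = -(q * star q) := by rw [star_eq_neg.mpr hre, mul_neg, neg_neg]
    _ = -1 := by rw [self_mul_star, normSq_eq_norm_mul_self, hn, mul_one, coe_one]

theorem exists_pure_unit_mul_pure : ∃ i j : ℍ[ℝ],
    i.re = 0 ∧ ‖i‖ = 1 ∧ j.re = 0 ∧ ‖j‖ = 1 ∧ (i * j).re = 0 := by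
  refine ⟨show ℍ[ℝ] from ⟨0, 1, 0, 0⟩, show ℍ[ℝ] from ⟨0, 0, 1, 0⟩, rfl, ?_, rfl, ?_, ?_⟩
  · rw [norm_eq_one_iff_normSq_eq_one, normSq_def']; norm_num
  · rw [norm_eq_one_iff_normSq_eq_one, normSq_def']; norm_num
  · rw [re_mul]; norm_num

end Quaternion

/-- Algebraic core of total geodesicity of quaternionic submanifolds: if
`W ⊆ V` is invariant under all admissible complex structures `J = ρ(q)` and
`B : W × W → V/W` is a symmetric bilinear map with `B(X, JY) = J̄ B(X,Y)` for
all such `J`, then `B = 0`. -/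
theorem stmt16 {V : Type*} [AddCommGroup V] [Module ℝ V]
    (ρ : Quaternion ℝ →ₐ[ℝ] Module.End ℝ V) (W : Submodule ℝ V)
    (hW : ∀ q : Quaternion ℝ, q.re = 0 → ‖q‖ = 1 →
      W ≤ W.comap (ρ q : V →ₗ[ℝ] V))
    (B : W →ₗ[ℝ] W →ₗ[ℝ] (V ⧸ W))
    (hsymm : ∀ X Y : W, B X Y = B Y X)
    (hB : ∀ (q : Quaternion ℝ) (hq : q.re = 0) (hn : ‖q‖ = 1) (X Y : W),
      B X ⟨ρ q (Y : V), hW q hq hn Y.2⟩ =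
        Submodule.mapQ W W (ρ q : V →ₗ[ℝ] V) (hW q hq hn) (B X Y)) :
    B = 0 := by
  have anti (q : Quaternion ℝ) (hq : q.re = 0) (hn : ‖q‖ = 1) (X Y : W) :
      B ((ρ q).restrict (hW q hq hn) X) ((ρ q).restrict (hW q hq hn) Y) = -B X Y :=
    LinearMap.apply_apply_eq_neg_of_apply_right_eq hsymm (hB q hq hn)
      (Submodule.mapQ_mapQ_of_mul_self_eq_neg_one
        (by rw [← map_mul, Quaternion.mul_self_eq_neg_one hq hn, map_neg, map_one]) _) X Y
  obtain ⟨i, j, hi, hi1, hj, hj1, hij⟩ := Quaternion.exists_pure_unit_mul_pure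
  have hij1 : ‖i * j‖ = 1 := by rw [norm_mul, hi1, hj1, one_mul]
  have : IsAddTorsionFree (V ⧸ W) := .of_isTorsionFree ℝ _
  exact LinearMap.eq_zero_of_apply_apply_eq_neg_of_comp (anti i hi hi1) (anti j hj hj1)
    (anti _ hij hij1) fun X => Subtype.ext (by simp)
end
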